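/- arXiv:1108.1171 — 2 statements merged into one kernel-verified Lean document; each statement's English description precedes it below -/
import Mathlib

section
/- For any prime p ≥ 7, the sum over k from 1 to p-1 of H_k^2/k^2 is congruent to 0 modulo p, as p-integral rational numbers. -/
/-!
Work in `𝔽_p` with `a_k = k⁻¹`, `H_k = a_1 + ⋯ + a_k`, `H⁽²⁾_k = a_1² + ⋯ + a_k²`, and let
`T = ∑ H_k² a_k²`, `B = ∑ H_k H⁽²⁾_k a_k`. The power sums `∑ a_k ^ j` vanish for `0 < j < p - 1`, so
the symmetric-function identities for prefix sums give `∑ H_k a_k = 0`, `∑ H⁽²⁾_k a_k² = 0` and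
`2T + 4B = 4 ∑ H_k a_k³`.

The second relation between `T` and `B` comes from the interpolation polynomial `f` of `k ↦ H_k`:
it has degree `< p`, so `f(X) - f(X - 1) = X ^ (p - 2)` and `f'(k) = f_1 - 2 H⁽²⁾_k`. Summing a
polynomial of degree `< 3 (p - 1)` over `𝔽_p` returns minus its coefficients of `X ^ (p - 1)` and
`X ^ (2 (p - 1))`. This turns the two vanishing sums into `f_1 = 0` and `f_3 = 0`, so that
`∑ H_k a_k³ = -f_3 = 0`; applied to `X ^ (p - 3) (X (f²)' - f²)` it gives `T + 4B = -f_1² = 0`.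
Hence `T = 0`. The rational sum has `p`-integral terms, on which reduction mod `p` is additive and
multiplicative.
-/

open Finset

def harmonicNum (n : ℕ) : ℚ := ∑ k ∈ Finset.Icc 1 n, (1 / (k : ℚ))

/-- `x ≡ 0 (mod p^m)` for a rational `x`: `x` is `p`-integral and `p^m` divides its numerator. -/
def CongrZeroMod (p m : ℕ) (x : ℚ) : Prop := (p : ℤ) ^ m ∣ x.num ∧ ¬ (p ∣ x.den)

open Polynomial

namespace FiniteField

variable {K : Type*} [Field K] [Fintype K]

local notation "q" => Fintype.card K

theorem sum_pow_eq_ite (n : ℕ) :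
    ∑ x : K, x ^ n = if n ≠ 0 ∧ q - 1 ∣ n then -1 else 0 := by
  classical
  rcases eq_or_ne n 0 with rfl | hn
  · simp
  simp only [ne_eq, hn, not_false_eq_true, true_and, ← sum_pow_units K n]
  rw [← Fintype.sum_subtype_add_sum_subtype (· ≠ (0 : K)), ← unitsEquivNeZero.sum_comp]
  have hzero : ∑ x : {x : K // ¬x ≠ 0}, (x : K) ^ n = 0 :=
    Fintype.sum_eq_zero _ fun x => by rw [not_not.mp x.2, zero_pow hn]
  rw [hzero, add_zero]
  rfl

theorem inv_pow_eq_pow_of_add_eq (x : K) {j e : ℕ} (hj : j ≠ 0) (he : e ≠ 0)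
    (hje : j + e = q - 1) : x⁻¹ ^ j = x ^ e := by
  rcases eq_or_ne x 0 with rfl | hx
  · rw [inv_zero, zero_pow hj, zero_pow he]
  rw [inv_pow, inv_eq_of_mul_eq_one_left]
  rw [← pow_add, add_comm, hje, pow_card_sub_one_eq_one x hx]

theorem sum_eval_eq_neg_coeff (g : K[X]) (hg : g.natDegree < 3 * (q - 1)) :
    ∑ x : K, g.eval x = -(g.coeff (q - 1) + g.coeff (2 * (q - 1))) := by
  have hq : 1 < q := Fintype.one_lt_card
  simp_rw [eval_eq_sum_range' hg]
  rw [sum_comm]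
  simp_rw [← mul_sum, sum_pow_eq_ite, mul_ite, mul_neg, mul_one, mul_zero]
  rw [sum_eq_add_of_mem (q - 1) (2 * (q - 1)) (mem_range.mpr (by omega))
    (mem_range.mpr (by omega)) (by omega), if_pos ⟨by omega, dvd_rfl⟩,
    if_pos ⟨by omega, dvd_mul_left _ _⟩, neg_add]
  rintro n hn ⟨h1, h2⟩
  rw [if_neg]
  rintro ⟨hn0, m, rfl⟩
  have : m < 3 := by rw [mem_range] at hn; nlinarith
  interval_cases m <;> omega

theorem sum_inv_pow_eq_zero {j : ℕ} (hj : j < q - 1) : ∑ x : K, x⁻¹ ^ j = 0 :=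
  (Fintype.sum_equiv (Equiv.inv K) _ _ fun _ => rfl).trans (sum_pow_lt_card_sub_one K j hj)

end FiniteField

theorem Polynomial.coeff_X_mul_derivative_sub {R : Type*} [CommRing R] (h : R[X]) (m : ℕ) :
    (X * derivative h - h).coeff (m + 1) = m * h.coeff (m + 1) := by
  rw [coeff_sub, coeff_X_mul, coeff_derivative]
  ring

section PrefixSums

variable {R : Type*} [CommRing R] (a : ℕ → R)

theorem two_mul_sum_Icc_prefix_mul (n : ℕ) :
    2 * ∑ k ∈ Icc 1 n, (∑ i ∈ Icc 1 k, a i) * a k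
      = (∑ i ∈ Icc 1 n, a i) ^ 2 + ∑ i ∈ Icc 1 n, a i ^ 2 := by
  induction n with
  | zero => simp
  | succ n ih =>
    simp only [sum_Icc_succ_top (Nat.le_add_left 1 n)]
    linear_combination ih

theorem two_mul_sum_Icc_prefix_sq_mul_sq (n : ℕ) :
    2 * ∑ k ∈ Icc 1 n, (∑ i ∈ Icc 1 k, a i) ^ 2 * a k ^ 2
      + 4 * ∑ k ∈ Icc 1 n, (∑ i ∈ Icc 1 k, a i) * (∑ i ∈ Icc 1 k, a i ^ 2) * a k
      = 2 * (∑ i ∈ Icc 1 n, a i) ^ 2 * ∑ i ∈ Icc 1 n, a i ^ 2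
        + (∑ i ∈ Icc 1 n, a i ^ 2) ^ 2 - ∑ i ∈ Icc 1 n, a i ^ 4
        + 4 * ∑ k ∈ Icc 1 n, (∑ i ∈ Icc 1 k, a i) * a k ^ 3 := by
  induction n with
  | zero => simp
  | succ n ih =>
    simp only [sum_Icc_succ_top (Nat.le_add_left 1 n)]
    linear_combination ih

end PrefixSums

namespace ZMod

theorem natCast_ne_zero_of_pos_of_lt {p k : ℕ} (hk0 : 0 < k) (hk : k < p) :
    (k : ZMod p) ≠ 0 := by
  rw [Ne, ZMod.natCast_eq_zero_iff]
  exact Nat.not_dvd_of_pos_of_lt hk0 hk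

theorem sum_Icc_natCast_eq_sum_univ {p : ℕ} [NeZero p] {M : Type*} [AddCommMonoid M]
    (ψ : ZMod p → M)
    (h0 : ψ 0 = 0) : ∑ k ∈ Icc 1 (p - 1), ψ k = ∑ x, ψ x := by
  rw [← Finset.sum_erase univ h0]
  refine Finset.sum_nbij' (fun k => (k : ZMod p)) ZMod.val ?_ ?_ ?_ ?_ (fun _ _ => rfl)
  · intro k hk
    rw [mem_Icc] at hk
    exact mem_erase.mpr ⟨natCast_ne_zero_of_pos_of_lt (by omega) (by omega), mem_univ _⟩
  · intro x hx
    rw [mem_erase, Ne, ← ZMod.val_eq_zero] at hx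
    have := ZMod.val_lt x
    rw [mem_Icc]
    omega
  · intro k hk
    rw [mem_Icc] at hk
    exact ZMod.val_cast_of_lt (by omega)
  · intro x _
    exact ZMod.natCast_zmod_val x

variable {p : ℕ} [Fact p.Prime]

theorem sum_Icc_inv_pow_eq_zero {j : ℕ} (hj0 : 0 < j) (hj : j < p - 1) :
    ∑ k ∈ Icc 1 (p - 1), ((k : ZMod p)⁻¹) ^ j = 0 := by
  rw [sum_Icc_natCast_eq_sum_univ (fun x : ZMod p => x⁻¹ ^ j) (by simp [zero_pow hj0.ne'])]
  exact FiniteField.sum_inv_pow_eq_zero (by rwa [ZMod.card])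

theorem sum_Icc_inv_eq_zero (hp : 3 ≤ p) : ∑ k ∈ Icc 1 (p - 1), (k : ZMod p)⁻¹ = 0 := by
  simpa only [pow_one] using sum_Icc_inv_pow_eq_zero (p := p) one_pos (by omega)

theorem inv_pow_eq_pow_of_add_eq (x : ZMod p) {j e : ℕ} (hj : j ≠ 0) (he : e ≠ 0)
    (hje : j + e = p - 1) : x⁻¹ ^ j = x ^ e :=
  FiniteField.inv_pow_eq_pow_of_add_eq x hj he (by rwa [ZMod.card])

noncomputable def harmonicPoly (p : ℕ) [Fact p.Prime] : (ZMod p)[X] :=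
  Lagrange.interpolate univ id fun x => ∑ i ∈ Icc 1 x.val, (i : ZMod p)⁻¹

theorem natDegree_harmonicPoly_lt : (harmonicPoly p).natDegree < p := by
  have h := Lagrange.degree_interpolate_lt (s := univ) (v := (id : ZMod p → ZMod p))
    (r := fun x => ∑ i ∈ Icc 1 x.val, (i : ZMod p)⁻¹) (Set.injOn_id _)
  rw [card_univ, ZMod.card] at h
  rcases eq_or_ne (harmonicPoly p) 0 with h0 | h0
  · rw [h0, natDegree_zero]
    exact (Fact.out : p.Prime).pos
  · exact (natDegree_lt_iff_degree_lt h0).mpr h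

theorem eval_natCast_harmonicPoly {k : ℕ} (hk : k < p) :
    (harmonicPoly p).eval (k : ZMod p) = ∑ i ∈ Icc 1 k, (i : ZMod p)⁻¹ := by
  refine (Lagrange.eval_interpolate_at_node (v := id) _ (Set.injOn_id _)
    (mem_univ (k : ZMod p))).trans ?_
  simp only [ZMod.val_cast_of_lt hk]

theorem harmonicPoly_sub_comp (hp : 3 ≤ p) :
    harmonicPoly p - (harmonicPoly p).comp (X - C 1) = X ^ (p - 2) := by
  have hdeg : (harmonicPoly p).natDegree < p := natDegree_harmonicPoly_lt
  refine eq_of_natDegree_lt_card_of_eval_eq _ _ Function.injective_id (fun x => ?_) ?_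
  · obtain ⟨k, hk, rfl⟩ : ∃ k < p, (k : ZMod p) = x := ⟨x.val, x.val_lt, x.natCast_zmod_val⟩
    simp only [id, eval_sub, eval_comp, eval_X, eval_C, eval_pow]
    rcases k with _ | m
    -- at `x = 0` the identity reads `H_0 - H_(p-1) = 0`
    · have hprev : ((0 : ℕ) : ZMod p) - 1 = ((p - 1 : ℕ) : ZMod p) := by
        rw [Nat.cast_sub (by omega), ZMod.natCast_self]; simp
      rw [hprev, eval_natCast_harmonicPoly hk, eval_natCast_harmonicPoly (by omega),
        sum_Icc_inv_eq_zero hp, Nat.cast_zero, zero_pow (by omega)]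
      simp
    · have hprev : ((m + 1 : ℕ) : ZMod p) - 1 = (m : ZMod p) := by push_cast; ring
      rw [hprev, eval_natCast_harmonicPoly hk, eval_natCast_harmonicPoly (by omega),
        sum_Icc_succ_top (by omega), add_sub_cancel_left,
        ← inv_pow_eq_pow_of_add_eq _ one_ne_zero (by omega) (by omega), pow_one]
  · rw [ZMod.card, natDegree_X_pow]
    have := natDegree_sub_le (harmonicPoly p) ((harmonicPoly p).comp (X - C 1))
    rw [natDegree_comp, natDegree_X_sub_C, mul_one, max_self] at this
    omega

theorem eval_derivative_harmonicPoly (hp : 5 ≤ p) (k : ℕ) :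
    (derivative (harmonicPoly p)).eval (k : ZMod p)
      = (harmonicPoly p).coeff 1 - 2 * ∑ i ∈ Icc 1 k, (i : ZMod p)⁻¹ ^ 2 := by
  have hdiff := congrArg derivative (harmonicPoly_sub_comp (p := p) (by omega))
  rw [derivative_sub, derivative_comp, derivative_sub, derivative_X, derivative_C, sub_zero,
    one_mul, derivative_X_pow] at hdiff
  have hcoeff : ((p - 2 : ℕ) : ZMod p) = -2 := by
    rw [Nat.cast_sub (by omega), ZMod.natCast_self]; ring
  induction k with
  | zero => simp [← coeff_zero_eq_eval_zero, coeff_derivative]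
  | succ m ih =>
    have hstep := congrArg (eval ((m + 1 : ℕ) : ZMod p)) hdiff
    simp only [eval_sub, eval_comp, eval_X, eval_C, eval_mul, eval_pow, hcoeff] at hstep
    rw [← inv_pow_eq_pow_of_add_eq _ two_ne_zero (by omega) (by omega), Nat.cast_succ,
      add_sub_cancel_right] at hstep
    rw [sum_Icc_succ_top (by omega), Nat.cast_succ]
    linear_combination hstep + ih

theorem sum_Icc_eval_X_pow_mul (h : (ZMod p)[X]) {e m : ℕ} (he : e ≠ 0) (hem : e + m = p - 1)
    (hh : h.natDegree < m + 2 * (p - 1)) :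
    ∑ k ∈ Icc 1 (p - 1), (X ^ e * h).eval (k : ZMod p) = -(h.coeff m + h.coeff (m + (p - 1))) := by
  have hdeg : (X ^ e * h).natDegree < 3 * (Fintype.card (ZMod p) - 1) := by
    have := natDegree_X_pow_le (R := ZMod p) e
    rw [ZMod.card]
    exact natDegree_mul_le.trans_lt (by omega)
  refine (sum_Icc_natCast_eq_sum_univ (fun x => (X ^ e * h).eval x)
    (by simp [zero_pow he])).trans ?_
  rw [FiniteField.sum_eval_eq_neg_coeff _ hdeg, ZMod.card, coeff_X_pow_mul', if_pos (by omega),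
    coeff_X_pow_mul', if_pos (by omega), show p - 1 - e = m by omega,
    show 2 * (p - 1) - e = m + (p - 1) by omega]

theorem harmonicPoly_coeff_one (hp : 5 ≤ p) : (harmonicPoly p).coeff 1 = 0 := by
  have hsum : 2 * ∑ k ∈ Icc 1 (p - 1), (∑ i ∈ Icc 1 k, (i : ZMod p)⁻¹) * (k : ZMod p)⁻¹ = 0 := by
    rw [two_mul_sum_Icc_prefix_mul, sum_Icc_inv_eq_zero (by omega),
      sum_Icc_inv_pow_eq_zero two_pos (by omega)]
    ring
  have hpoly : ∀ k ∈ Icc 1 (p - 1), (∑ i ∈ Icc 1 k, (i : ZMod p)⁻¹) * (k : ZMod p)⁻¹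
      = (X ^ (p - 2) * harmonicPoly p).eval (k : ZMod p) := by
    intro k hk
    rw [mem_Icc] at hk
    rw [eval_mul, eval_pow, eval_X, eval_natCast_harmonicPoly (by omega),
      ← inv_pow_eq_pow_of_add_eq _ one_ne_zero (by omega) (by omega), pow_one, mul_comm]
  rw [sum_congr rfl hpoly, sum_Icc_eval_X_pow_mul _ (m := 1) (by omega) (by omega)
    (natDegree_harmonicPoly_lt.trans (by omega)),
    coeff_eq_zero_of_natDegree_lt (n := 1 + (p - 1))
      (natDegree_harmonicPoly_lt.trans_le (by omega)),
    add_zero] at hsum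
  have h2 : (2 : ZMod p) ≠ 0 := by
    exact_mod_cast natCast_ne_zero_of_pos_of_lt (p := p) (k := 2) two_pos (by omega)
  simpa [h2] using hsum

theorem harmonicPoly_coeff_three (hp : 7 ≤ p) : (harmonicPoly p).coeff 3 = 0 := by
  have hsum : 2 * ∑ k ∈ Icc 1 (p - 1), (∑ i ∈ Icc 1 k, (i : ZMod p)⁻¹ ^ 2) * (k : ZMod p)⁻¹ ^ 2
      = 0 := by
    rw [two_mul_sum_Icc_prefix_mul]
    simp only [← pow_mul]
    rw [sum_Icc_inv_pow_eq_zero two_pos (by omega), sum_Icc_inv_pow_eq_zero (by omega) (by omega)]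
    ring
  have hpoly : ∀ k ∈ Icc 1 (p - 1),
      (X ^ (p - 3) * derivative (harmonicPoly p)).eval (k : ZMod p)
        = -(2 * ((∑ i ∈ Icc 1 k, (i : ZMod p)⁻¹ ^ 2) * (k : ZMod p)⁻¹ ^ 2)) := by
    intro k hk
    rw [eval_mul, eval_pow, eval_X, eval_derivative_harmonicPoly (by omega),
      harmonicPoly_coeff_one (by omega),
      ← inv_pow_eq_pow_of_add_eq (k : ZMod p) (j := 2) two_ne_zero (by omega) (by omega)]
    ring
  have hdeg : (derivative (harmonicPoly p)).natDegree < p - 1 :=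
    (natDegree_derivative_le _).trans_lt (by have := natDegree_harmonicPoly_lt (p := p); omega)
  have h := sum_Icc_eval_X_pow_mul (derivative (harmonicPoly p)) (e := p - 3) (m := 2) (by omega)
    (by omega) (by omega)
  rw [sum_congr rfl hpoly, sum_neg_distrib, ← mul_sum, hsum, coeff_derivative,
    coeff_eq_zero_of_natDegree_lt (hdeg.trans_le (by omega)), add_zero] at h
  have h3 : (3 : ZMod p) ≠ 0 := by
    exact_mod_cast natCast_ne_zero_of_pos_of_lt (p := p) (k := 3) three_pos (by omega)
  simp only [Nat.reduceAdd] at h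
  have h' : (harmonicPoly p).coeff 3 * 3 = 0 := by linear_combination h
  exact (mul_eq_zero.mp h').resolve_right h3

theorem sum_harmonic_mul_inv_pow_three (hp : 7 ≤ p) :
    ∑ k ∈ Icc 1 (p - 1), (∑ i ∈ Icc 1 k, (i : ZMod p)⁻¹) * (k : ZMod p)⁻¹ ^ 3 = 0 := by
  have hpoly : ∀ k ∈ Icc 1 (p - 1), (∑ i ∈ Icc 1 k, (i : ZMod p)⁻¹) * (k : ZMod p)⁻¹ ^ 3
      = (X ^ (p - 4) * harmonicPoly p).eval (k : ZMod p) := by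
    intro k hk
    rw [mem_Icc] at hk
    rw [eval_mul, eval_pow, eval_X, eval_natCast_harmonicPoly (by omega),
      inv_pow_eq_pow_of_add_eq (k : ZMod p) (j := 3) (e := p - 4) three_ne_zero (by omega)
        (by omega), mul_comm]
  rw [sum_congr rfl hpoly, sum_Icc_eval_X_pow_mul _ (m := 3) (by omega) (by omega)
    (natDegree_harmonicPoly_lt.trans (by omega)),
    coeff_eq_zero_of_natDegree_lt (n := 3 + (p - 1))
      (natDegree_harmonicPoly_lt.trans_le (by omega)),
    add_zero, harmonicPoly_coeff_three hp, neg_zero]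

theorem sum_harmonic_sq_mul_inv_sq_add_four_mul (hp : 5 ≤ p) :
    ∑ k ∈ Icc 1 (p - 1), (∑ i ∈ Icc 1 k, (i : ZMod p)⁻¹) ^ 2 * (k : ZMod p)⁻¹ ^ 2
      + 4 * ∑ k ∈ Icc 1 (p - 1),
          (∑ i ∈ Icc 1 k, (i : ZMod p)⁻¹) * (∑ i ∈ Icc 1 k, (i : ZMod p)⁻¹ ^ 2) * (k : ZMod p)⁻¹
      = 0 := by
  set f := harmonicPoly p
  have hf0 : f.coeff 0 = 0 := by
    rw [coeff_zero_eq_eval_zero, ← Nat.cast_zero, eval_natCast_harmonicPoly (by omega)]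
    simp
  have hf1 : f.coeff 1 = 0 := harmonicPoly_coeff_one hp
  have hpoly : ∀ k ∈ Icc 1 (p - 1),
      (∑ i ∈ Icc 1 k, (i : ZMod p)⁻¹) ^ 2 * (k : ZMod p)⁻¹ ^ 2
        + 4 * ((∑ i ∈ Icc 1 k, (i : ZMod p)⁻¹) * (∑ i ∈ Icc 1 k, (i : ZMod p)⁻¹ ^ 2)
          * (k : ZMod p)⁻¹)
      = -(X ^ (p - 3) * (X * derivative (f ^ 2) - f ^ 2)).eval (k : ZMod p) := by
    intro k hk
    rw [mem_Icc] at hk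
    have hk0 : (k : ZMod p) ≠ 0 := natCast_ne_zero_of_pos_of_lt (by omega) (by omega)
    rw [derivative_sq]
    simp only [eval_mul, eval_sub, eval_pow, eval_X, eval_C]
    rw [eval_natCast_harmonicPoly (by omega), eval_derivative_harmonicPoly hp, hf1,
      ← inv_pow_eq_pow_of_add_eq (k : ZMod p) (j := 2) two_ne_zero (by omega) (by omega)]
    field_simp
    ring
  have hdeg : (X * derivative (f ^ 2) - f ^ 2).natDegree < 2 + 2 * (p - 1) := by
    have hf : f.natDegree < p := natDegree_harmonicPoly_lt
    have hsq : (f ^ 2).natDegree ≤ 2 * f.natDegree := natDegree_pow_le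
    have hder := natDegree_derivative_le (f ^ 2)
    have hX := natDegree_mul_le (p := X) (q := derivative (f ^ 2))
    have := natDegree_sub_le (X * derivative (f ^ 2)) (f ^ 2)
    rw [natDegree_X] at hX
    omega
  -- the coefficient of `X ^ (p + 1)` in `X * (f ^ 2)' - f ^ 2` carries the factor `p`
  rw [mul_sum, ← sum_add_distrib, sum_congr rfl hpoly, sum_neg_distrib, neg_eq_zero,
    sum_Icc_eval_X_pow_mul _ (m := 2) (by omega) (by omega) hdeg, show 2 + (p - 1) = p + 1 by omega,
    coeff_X_mul_derivative_sub, coeff_X_mul_derivative_sub, ZMod.natCast_self, zero_mul,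
    add_zero, Nat.cast_one, one_mul, neg_eq_zero, sq, coeff_mul]
  simp [Finset.Nat.antidiagonal_succ, hf0, hf1]

theorem sum_harmonic_sq_mul_inv_sq (hp : 7 ≤ p) :
    ∑ k ∈ Icc 1 (p - 1), (∑ i ∈ Icc 1 k, (i : ZMod p)⁻¹) ^ 2 * (k : ZMod p)⁻¹ ^ 2 = 0 := by
  have h := two_mul_sum_Icc_prefix_sq_mul_sq (fun i => (i : ZMod p)⁻¹) (p - 1)
  rw [sum_Icc_inv_eq_zero (by omega), sum_Icc_inv_pow_eq_zero two_pos (by omega),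
    sum_Icc_inv_pow_eq_zero (by omega) (by omega), sum_harmonic_mul_inv_pow_three hp] at h
  linear_combination h - sum_harmonic_sq_mul_inv_sq_add_four_mul (by omega : 5 ≤ p)

end ZMod

def pIntegralRat (p : ℕ) [Fact p.Prime] : Subring ℚ where
  carrier := {x | ¬p ∣ x.den}
  mul_mem' {x y} hx hy h :=
    ((Fact.out : p.Prime).dvd_mul.mp (h.trans (Rat.mul_den_dvd x y))).elim hx hy
  one_mem' := by simpa using (Fact.out : p.Prime).one_lt.ne'
  add_mem' {x y} hx hy h :=
    ((Fact.out : p.Prime).dvd_mul.mp (h.trans (Rat.add_den_dvd x y))).elim hx hy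
  zero_mem' := by simpa using (Fact.out : p.Prime).one_lt.ne'
  neg_mem' {x} hx := by simpa using hx

namespace pIntegralRat

variable {p : ℕ} [Fact p.Prime] {x y : ℚ}

theorem mem_iff : x ∈ pIntegralRat p ↔ ¬p ∣ x.den := Iff.rfl

theorem den_ne_zero (hx : x ∈ pIntegralRat p) : (x.den : ZMod p) ≠ 0 :=
  mt (ZMod.natCast_eq_zero_iff _ _).mp hx

theorem ratCast_mul (hx : x ∈ pIntegralRat p) (hy : y ∈ pIntegralRat p) :
    ((x * y : ℚ) : ZMod p) = x * y :=
  Rat.cast_mul_of_ne_zero (den_ne_zero hx) (den_ne_zero hy)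

theorem ratCast_pow (hx : x ∈ pIntegralRat p) (n : ℕ) :
    ((x ^ n : ℚ) : ZMod p) = (x : ZMod p) ^ n := by
  induction n with
  | zero => simp
  | succ n ih => rw [pow_succ, ratCast_mul (pow_mem hx n) hx, ih, pow_succ]

theorem ratCast_sum {ι : Type*} {s : Finset ι} {t : ι → ℚ} (ht : ∀ i ∈ s, t i ∈ pIntegralRat p) :
    ((∑ i ∈ s, t i : ℚ) : ZMod p) = ∑ i ∈ s, (t i : ZMod p) := by
  classical
  induction s using Finset.induction_on with
  | empty => simp
  | insert a s ha ih =>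
    have hs : ∀ i ∈ s, t i ∈ pIntegralRat p := fun i hi => ht i (mem_insert_of_mem hi)
    rw [sum_insert ha, sum_insert ha, Rat.cast_add_of_ne_zero
      (den_ne_zero (ht a (mem_insert_self a s))) (den_ne_zero (sum_mem hs)), ih hs]

theorem inv_natCast_mem {k : ℕ} (hk : k < p) : (k : ℚ)⁻¹ ∈ pIntegralRat p := by
  rw [mem_iff, Rat.inv_natCast_den]
  split_ifs
  · simpa using (Fact.out : p.Prime).one_lt.ne'
  · exact Nat.not_dvd_of_pos_of_lt (by omega) hk

theorem ratCast_inv_natCast {k : ℕ} (hk : (k : ZMod p) ≠ 0) :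
    (((k : ℚ)⁻¹ : ℚ) : ZMod p) = (k : ZMod p)⁻¹ := by
  rw [Rat.cast_inv_of_ne_zero (by simpa using hk), Rat.cast_natCast]

theorem congrZeroMod_one (hx : x ∈ pIntegralRat p) (h : (x : ZMod p) = 0) : CongrZeroMod p 1 x := by
  refine ⟨?_, hx⟩
  rw [Rat.cast_def, div_eq_zero_iff, or_iff_left (den_ne_zero hx)] at h
  simpa using (ZMod.intCast_zmod_eq_zero_iff_dvd _ _).mp h

end pIntegralRat

theorem harmonicNum_mem_pIntegralRat {p k : ℕ} [Fact p.Prime] (hk : k < p) :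
    harmonicNum k ∈ pIntegralRat p := by
  simp_rw [harmonicNum, one_div]
  exact sum_mem fun i hi => pIntegralRat.inv_natCast_mem (by rw [mem_Icc] at hi; omega)

theorem ratCast_harmonicNum {p k : ℕ} [Fact p.Prime] (hk : k < p) :
    (harmonicNum k : ZMod p) = ∑ i ∈ Icc 1 k, (i : ZMod p)⁻¹ := by
  simp_rw [harmonicNum, one_div]
  rw [pIntegralRat.ratCast_sum fun i hi =>
    pIntegralRat.inv_natCast_mem (by rw [mem_Icc] at hi; omega)]
  refine sum_congr rfl fun i hi => ?_
  rw [mem_Icc] at hi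
  exact pIntegralRat.ratCast_inv_natCast (ZMod.natCast_ne_zero_of_pos_of_lt (by omega) (by omega))

theorem sum_harmonic_sq_div_sq_mod_p (p : ℕ) (hp : p.Prime) (hp7 : 7 ≤ p) :
    CongrZeroMod p 1
      (∑ k ∈ Finset.Icc 1 (p - 1), (harmonicNum k) ^ 2 / (k : ℚ) ^ 2) := by
  have := Fact.mk hp
  have hterm : ∀ k ∈ Icc 1 (p - 1), harmonicNum k ^ 2 / (k : ℚ) ^ 2 ∈ pIntegralRat p ∧
      ((harmonicNum k ^ 2 / (k : ℚ) ^ 2 : ℚ) : ZMod p)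
        = (∑ i ∈ Icc 1 k, (i : ZMod p)⁻¹) ^ 2 * (k : ZMod p)⁻¹ ^ 2 := by
    intro k hk
    rw [mem_Icc] at hk
    have hH := harmonicNum_mem_pIntegralRat (p := p) (k := k) (by omega)
    have hinv := pIntegralRat.inv_natCast_mem (p := p) (k := k) (by omega)
    rw [div_eq_mul_inv, ← inv_pow]
    refine ⟨mul_mem (pow_mem hH 2) (pow_mem hinv 2), ?_⟩
    rw [pIntegralRat.ratCast_mul (pow_mem hH 2) (pow_mem hinv 2), pIntegralRat.ratCast_pow hH,
      pIntegralRat.ratCast_pow hinv, ratCast_harmonicNum (by omega),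
      pIntegralRat.ratCast_inv_natCast (ZMod.natCast_ne_zero_of_pos_of_lt (by omega) (by omega))]
  refine pIntegralRat.congrZeroMod_one (sum_mem fun k hk => (hterm k hk).1) ?_
  rw [pIntegralRat.ratCast_sum fun k hk => (hterm k hk).1, sum_congr rfl fun k hk => (hterm k hk).2]
  exact ZMod.sum_harmonic_sq_mul_inv_sq hp7
end

section
/- For any prime p ≥ 7, H(1,2,1) + H(3,1) ≡ -∑_{j=1}^{p-1} H_j^2/j^2 modulo p^2, as p-integral rational numbers, where H(1,2,1) = ∑_{1 ≤ i < j < k ≤ p-1} 1/(i j^2 k) and H(3,1) = ∑_{1 ≤ i < j ≤ p-1} 1/(i^3 j). -/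
open Finset

/-!
Write `H_{p-1} · ∑_{j<p} H_j / j² = ∑_{k,j<p} H_j / (k j²)`. The terms with `k ≤ j` sum to
`∑ H_j² / j²`, and expanding `H_j = ∑_{i<j} 1/i + 1/j` in those with `j < k` gives
`H(1,2,1) + H(3,1)`; so the sum in question is exactly `H_{p-1} · ∑_{j<p} H_j / j²`.
The second factor is `p`-integral, and `p² ∣ H_{p-1}` is Wolstenholme's theorem: pairing `j` with
`p - j` gives `2 H_{p-1} = p ∑ 1 / (j (p - j))`, and modulo `p` the last sum is
`-∑_{0<j<p} j^{p-3} = 0`.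
-/

theorem harmonicNum_succ (n : ℕ) : harmonicNum (n + 1) = harmonicNum n + 1 / (n + 1 : ℕ) :=
  sum_Icc_succ_top (by omega) _

theorem harmonicNum_eq_sum_Ico_add (j : ℕ) :
    harmonicNum j = ∑ i ∈ Ico 1 j, 1 / (i : ℚ) + 1 / j := by
  cases j with
  | zero => simp [harmonicNum]
  | succ n => rw [harmonicNum_succ, Ico_add_one_right_eq_Icc]; rfl

theorem sum_Icc_sum_Ico_div_add_sum_Icc_div (n : ℕ) (m : ℚ) :
    ∑ j ∈ Icc 1 n, ∑ i ∈ Ico 1 j, 1 / ((i : ℚ) * (j : ℚ) ^ 2 * m)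
      + ∑ j ∈ Icc 1 n, 1 / ((j : ℚ) ^ 3 * m)
      = (∑ j ∈ Icc 1 n, harmonicNum j / (j : ℚ) ^ 2) / m := by
  rw [← sum_add_distrib, sum_div]
  refine sum_congr rfl fun j _ => ?_
  rw [harmonicNum_eq_sum_Ico_add, add_div, add_div, sum_div, sum_div]
  congr 1
  · exact sum_congr rfl fun i _ => by field_simp
  · field_simp

theorem H121_add_H31_add_sum_sq_eq_harmonicNum_mul (n : ℕ) :
    ((∑ k ∈ Icc 1 n, ∑ j ∈ Ico 1 k, ∑ i ∈ Ico 1 j, (1 / ((i : ℚ) * (j : ℚ) ^ 2 * (k : ℚ))))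
      + (∑ j ∈ Icc 1 n, ∑ i ∈ Ico 1 j, (1 / ((i : ℚ) ^ 3 * (j : ℚ)))))
      + (∑ j ∈ Icc 1 n, (harmonicNum j) ^ 2 / (j : ℚ) ^ 2)
    = harmonicNum n * ∑ j ∈ Icc 1 n, harmonicNum j / (j : ℚ) ^ 2 := by
  induction n with
  | zero => simp
  | succ n ih =>
    have step := sum_Icc_sum_Ico_div_add_sum_Icc_div n ((n + 1 : ℕ) : ℚ)
    simp only [sum_Icc_succ_top (show 1 ≤ n + 1 by omega), Ico_add_one_right_eq_Icc]
    linear_combination ih + step -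
      (∑ j ∈ Icc 1 n, harmonicNum j / (j : ℚ) ^ 2) * harmonicNum_succ n

namespace padicNorm

variable {p : ℕ} [hp : Fact p.Prime]

theorem not_dvd_den_of_le_one {x : ℚ} (hx : padicNorm p x ≤ 1) : ¬ p ∣ x.den := by
  intro hden
  have hnum : padicNorm p x.num = 1 := by
    rw [int_eq_one_iff]
    intro hnum
    exact hp.out.ne_one (Nat.eq_one_of_dvd_coprimes x.reduced (Int.natCast_dvd.mp hnum) hden)
  have hden_pos : 0 < padicNorm p x.den :=
    (padicNorm.nonneg _).lt_of_ne' (padicNorm.nonzero (by positivity))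
  have : padicNorm p x = 1 / padicNorm p x.den := by
    rw [← hnum, ← padicNorm.div, Rat.num_div_den]
  rw [this, one_div, inv_le_one₀ hden_pos] at hx
  exact (nat_lt_one_iff _).mpr hden |>.not_ge hx

theorem num_eq_of_le_one {x : ℚ} (hx : padicNorm p x ≤ 1) : padicNorm p x.num = padicNorm p x := by
  conv_rhs => rw [← Rat.num_div_den x, padicNorm.div,
    (nat_eq_one_iff _).mpr (not_dvd_den_of_le_one hx), div_one]

theorem natCast_den_ne_zero_of_le_one {x : ℚ} (hx : padicNorm p x ≤ 1) :
    (x.den : ZMod p) ≠ 0 := by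
  rw [Ne, ZMod.natCast_eq_zero_iff]
  exact not_dvd_den_of_le_one hx

theorem one_div_natCast {k : ℕ} (hk : ¬ p ∣ k) : padicNorm p (1 / k) = 1 := by
  rw [padicNorm.div, padicNorm.one, (nat_eq_one_iff k).mpr hk, div_one]

theorem le_inv_of_ratCast_eq_zero {x : ℚ} (hx : padicNorm p x ≤ 1) (h : (x : ZMod p) = 0) :
    padicNorm p x ≤ (p : ℚ)⁻¹ := by
  rw [Rat.cast_def, div_eq_zero_iff, or_iff_left (natCast_den_ne_zero_of_le_one hx),
    ZMod.intCast_zmod_eq_zero_iff_dvd] at h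
  rw [← num_eq_of_le_one hx, ← zpow_neg_one]
  exact (dvd_iff_norm_le (n := 1)).mp (by simpa using h)

end padicNorm

theorem Rat.cast_sum_zmod_of_padicNorm_le_one {p : ℕ} [Fact p.Prime] {ι : Type*} (s : Finset ι)
    (f : ι → ℚ) (hf : ∀ i ∈ s, padicNorm p (f i) ≤ 1) :
    ((∑ i ∈ s, f i : ℚ) : ZMod p) = ∑ i ∈ s, (f i : ZMod p) := by
  classical
  induction s using Finset.induction_on with
  | empty => simp
  | insert a s ha ih =>
    rw [forall_mem_insert] at hf
    rw [sum_insert ha, sum_insert ha,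
      Rat.cast_add_of_ne_zero (padicNorm.natCast_den_ne_zero_of_le_one hf.1)
        (padicNorm.natCast_den_ne_zero_of_le_one (padicNorm.sum_le' hf.2 zero_le_one)),
      ih hf.2]

theorem congrZeroMod_of_padicNorm_le {p m : ℕ} [Fact p.Prime] {x : ℚ}
    (hx : padicNorm p x ≤ (p : ℚ) ^ (-(m : ℤ))) : CongrZeroMod p m x := by
  have hx1 : padicNorm p x ≤ 1 :=
    hx.trans (zpow_le_one_of_nonpos₀ (by exact_mod_cast (Fact.out : p.Prime).one_le) (by omega))
  refine ⟨?_, padicNorm.not_dvd_den_of_le_one hx1⟩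
  exact_mod_cast padicNorm.dvd_iff_norm_le.mpr ((padicNorm.num_eq_of_le_one hx1).trans_le hx)

theorem padicNorm_harmonicNum_le_one {p n : ℕ} [Fact p.Prime] (hn : n < p) :
    padicNorm p (harmonicNum n) ≤ 1 :=
  padicNorm.sum_le' (fun _ hk => (padicNorm.one_div_natCast
    (Nat.not_dvd_of_pos_of_lt (mem_Icc.mp hk).1 ((mem_Icc.mp hk).2.trans_lt hn))).le) zero_le_one

theorem padicNorm_sum_harmonicNum_div_sq_le_one {p n : ℕ} [Fact p.Prime] (hn : n < p) :
    padicNorm p (∑ j ∈ Icc 1 n, harmonicNum j / (j : ℚ) ^ 2) ≤ 1 := by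
  refine padicNorm.sum_le' (fun j hj => ?_) zero_le_one
  obtain ⟨hj1, hjn⟩ := mem_Icc.mp hj
  rw [padicNorm.div, IsAbsoluteValue.abv_pow (padicNorm p),
    (padicNorm.nat_eq_one_iff j).mpr (Nat.not_dvd_of_pos_of_lt hj1 (by omega)), one_pow, div_one]
  exact padicNorm_harmonicNum_le_one (by omega)

theorem two_mul_sum_Ico_one_div (n : ℕ) :
    2 * ∑ j ∈ Ico 1 n, 1 / (j : ℚ) = n * ∑ j ∈ Ico 1 n, 1 / ((j * (n - j) : ℕ) : ℚ) := by
  have reflect : ∑ j ∈ Ico 1 n, 1 / (j : ℚ) = ∑ j ∈ Ico 1 n, 1 / ((n - j : ℕ) : ℚ) := by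
    rw [sum_Ico_reflect (fun j => 1 / (j : ℚ)) 1 (Nat.le_succ n)]
    simp
  rw [two_mul]
  nth_rw 2 [reflect]
  rw [← sum_add_distrib, mul_sum]
  refine sum_congr rfl fun j hj => ?_
  obtain ⟨hj1, hjn⟩ := mem_Ico.mp hj
  have hj : (j : ℚ) ≠ 0 := by positivity
  have hnj : (n : ℚ) - j ≠ 0 := sub_ne_zero.mpr (by exact_mod_cast hjn.ne')
  push_cast [Nat.cast_sub hjn.le]
  field_simp
  ring

theorem ZMod.sum_range_natCast {p : ℕ} [NeZero p] {M : Type*} [AddCommMonoid M]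
    (f : ZMod p → M) : ∑ j ∈ range p, f j = ∑ x : ZMod p, f x :=
  sum_nbij' (fun j => (j : ZMod p)) ZMod.val (fun _ _ => mem_univ _)
    (fun x _ => mem_range.mpr (ZMod.val_lt x)) (fun _ hj => ZMod.val_cast_of_lt (mem_range.mp hj))
    (fun x _ => ZMod.natCast_zmod_val x) (fun _ _ => rfl)

theorem ZMod.sum_Ico_one_pow_eq_zero {p k : ℕ} [Fact p.Prime] (hk0 : k ≠ 0) (hk : k < p - 1) :
    ∑ j ∈ Ico 1 p, (j : ZMod p) ^ k = 0 := by
  have := FiniteField.sum_pow_lt_card_sub_one (K := ZMod p) k (by rwa [ZMod.card])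
  rwa [← ZMod.sum_range_natCast, range_eq_Ico,
    sum_eq_sum_Ico_succ_bot (Fact.out : p.Prime).pos, Nat.cast_zero, zero_pow hk0, zero_add] at this

theorem ZMod.ratCast_one_div_mul_sub_eq_neg_pow {p j : ℕ} [Fact p.Prime] (hp3 : 3 ≤ p)
    (hj : j ∈ Ico 1 p) :
    ((1 / ((j * (p - j) : ℕ) : ℚ) : ℚ) : ZMod p) = -(j : ZMod p) ^ (p - 3) := by
  obtain ⟨hj1, hjp⟩ := mem_Ico.mp hj
  have hj0 : (j : ZMod p) ≠ 0 := by
    rw [Ne, ZMod.natCast_eq_zero_iff]; exact Nat.not_dvd_of_pos_of_lt hj1 hjp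
  have hcast : ((j * (p - j) : ℕ) : ZMod p) = -(j : ZMod p) ^ 2 := by
    push_cast [Nat.cast_sub hjp.le, ZMod.natCast_self]; ring
  have hfermat : (j : ZMod p) ^ 2 * (j : ZMod p) ^ (p - 3) = 1 := by
    rw [← pow_add, show 2 + (p - 3) = p - 1 by omega, ZMod.pow_card_sub_one_eq_one hj0]
  rw [Rat.cast_div_of_ne_zero (by simp) (by rw [Rat.num_natCast, Int.cast_natCast, hcast]; simpa),
    Rat.cast_one, Rat.cast_natCast, hcast, one_div, inv_neg, neg_inj]
  exact inv_eq_of_mul_eq_one_right hfermat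

theorem padicNorm_sum_one_div_mul_sub_le {p : ℕ} [hp : Fact p.Prime] (hp5 : 5 ≤ p) :
    padicNorm p (∑ j ∈ Ico 1 p, 1 / ((j * (p - j) : ℕ) : ℚ)) ≤ (p : ℚ)⁻¹ := by
  have hterm : ∀ j ∈ Ico 1 p, padicNorm p (1 / ((j * (p - j) : ℕ) : ℚ)) ≤ 1 := by
    intro j hj
    obtain ⟨hj1, hjp⟩ := mem_Ico.mp hj
    refine (padicNorm.one_div_natCast fun h => ?_).le
    rcases hp.out.dvd_mul.mp h with h | h <;> exact Nat.not_dvd_of_pos_of_lt (by omega) (by omega) h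
  refine padicNorm.le_inv_of_ratCast_eq_zero (padicNorm.sum_le' hterm zero_le_one) ?_
  rw [Rat.cast_sum_zmod_of_padicNorm_le_one _ _ hterm,
    sum_congr rfl fun j hj => ZMod.ratCast_one_div_mul_sub_eq_neg_pow (by omega) hj,
    sum_neg_distrib, ZMod.sum_Ico_one_pow_eq_zero (by omega) (by omega), neg_zero]

theorem padicNorm_harmonicNum_sub_one_le {p : ℕ} [hp : Fact p.Prime] (hp5 : 5 ≤ p) :
    padicNorm p (harmonicNum (p - 1)) ≤ (p : ℚ) ^ (-2 : ℤ) := by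
  have hH : 2 * harmonicNum (p - 1) = p * ∑ j ∈ Ico 1 p, 1 / ((j * (p - j) : ℕ) : ℚ) := by
    rw [harmonicNum, Icc_sub_one_right_eq_Ico_of_not_isMin (by simpa using hp.out.ne_zero)]
    exact two_mul_sum_Ico_one_div p
  have htwo : padicNorm p 2 = 1 := by
    exact_mod_cast (padicNorm.nat_eq_one_iff 2).mpr fun h => by
      have := Nat.le_of_dvd two_pos h; omega
  calc padicNorm p (harmonicNum (p - 1)) = padicNorm p (2 * harmonicNum (p - 1)) := by
        rw [padicNorm.mul, htwo, one_mul]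
    _ = (p : ℚ)⁻¹ * padicNorm p (∑ j ∈ Ico 1 p, 1 / ((j * (p - j) : ℕ) : ℚ)) := by
        rw [hH, padicNorm.mul, padicNorm.padicNorm_p_of_prime]
    _ ≤ (p : ℚ)⁻¹ * (p : ℚ)⁻¹ :=
        mul_le_mul_of_nonneg_left (padicNorm_sum_one_div_mul_sub_le hp5) (by positivity)
    _ = (p : ℚ) ^ (-2 : ℤ) := by rw [zpow_neg, zpow_two, mul_inv]

theorem H121_plus_H31_congr_sum (p : ℕ) (hp : p.Prime) (hp7 : 7 ≤ p) :
    CongrZeroMod p 2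
      (((∑ k ∈ Finset.Icc 1 (p - 1), ∑ j ∈ Finset.Ico 1 k, ∑ i ∈ Finset.Ico 1 j,
            (1 / ((i : ℚ) * (j : ℚ) ^ 2 * (k : ℚ))))
        + (∑ j ∈ Finset.Icc 1 (p - 1), ∑ i ∈ Finset.Ico 1 j, (1 / ((i : ℚ) ^ 3 * (j : ℚ)))))
        + (∑ j ∈ Finset.Icc 1 (p - 1), (harmonicNum j) ^ 2 / (j : ℚ) ^ 2)) := by
  have := Fact.mk hp
  rw [H121_add_H31_add_sum_sq_eq_harmonicNum_mul]
  apply congrZeroMod_of_padicNorm_le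
  rw [padicNorm.mul, ← mul_one ((p : ℚ) ^ _)]
  exact mul_le_mul (padicNorm_harmonicNum_sub_one_le (by omega))
    (padicNorm_sum_harmonicNum_div_sq_le_one (by omega)) (padicNorm.nonneg _) (by positivity)
end
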